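/- Assume Hypotheses (H). Fix s ∈ I, T > s and f ∈ C_b(ℝ^d;ℝ^m). Let u be the classical solution, bounded on every strip [s,T']×ℝ^d, of the Cauchy problem D_t u = 𝒜(t)u on (s,∞)×ℝ^d with u(s,·) = f, and let ũ^P be the classical solution, bounded on every strip, of D_t u = 𝒜^P(t)u with initial datum |f| = (|f_1|,…,|f_m|). Then |u_k(t,x)| ≤ |ũ^P_k(t,x)| for every k = 1,…,m and every (t,x) ∈ [s,T]×ℝ^d. -/

import Mathlib

/-!
For `σ = ±1` the `2m` functions `uP k - σ u k` solve a weakly coupled system with the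
diffusion and drift of `𝒜` and with coupling `(C^P_{kh} + σ τ c_{kh}) / 2` from copy `(σ, k)`
to copy `(τ, h)`. Its off-diagonal entries are nonnegative, i.e. the system is cooperative, and
its initial data `|f_k| - σ f_k` are nonnegative, so the maximum principle for cooperative
systems makes all of them nonnegative on `[s, T] × ℝ^d`; this is `|u_k| ≤ uP_k`.

The maximum principle is proved on the penalized function `e^{-M(t-s)} w + ε e^{μ(t-s)} φ`,
where `M ≥ 0` bounds the row sums of the coupling, `φ` is the Lyapunov function of (H)(iii) and
`μ > λ - M`. The `φ` term makes it positive for large `|x|`, so if it takes a negative value it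
has a negative global minimum, necessarily at some `t₀ > s`. There its time derivative is
`≤ 0`, while the first- and second-order conditions in `x`, cooperativity and the row-sum bound
give `𝒜 v ≥ M v`; with the equation for `w` and `𝒜 φ ≤ λ φ` this bounds the time derivative
below by `(M + μ - λ) ε e^{μ(t-s)} φ > 0`.
-/

open Set Filter Metric MeasureTheory
open scoped BigOperators Topology

noncomputable section

/-- Euclidean space `ℝ^d`. -/
abbrev Euc (d : ℕ) := EuclideanSpace ℝ (Fin d)

variable {d m : ℕ}

/-- First-order spatial partial derivative. -/
def pd (i : Fin d) (f : Euc d → ℝ) (x : Euc d) : ℝ :=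
  fderiv ℝ f x (EuclideanSpace.single i 1)

/-- Second-order spatial partial derivative. -/
def pd2 (i j : Fin d) (f : Euc d → ℝ) (x : Euc d) : ℝ :=
  fderiv ℝ (fun y => pd j f y) x (EuclideanSpace.single i 1)

/-- The weakly coupled elliptic operator `𝒜(t)` with diffusion coefficients `Q`,
drift coefficients `b` and potential matrix `c`, acting on `ζ : ℝ^d → ℝ^m`. -/
def opA (Q : Fin m → ℝ → Euc d → Fin d → Fin d → ℝ)
    (b : Fin m → ℝ → Euc d → Fin d → ℝ)
    (c : ℝ → Euc d → Fin m → Fin m → ℝ)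
    (t : ℝ) (ζ : Euc d → Fin m → ℝ) (x : Euc d) (k : Fin m) : ℝ :=
  (∑ i, ∑ j, Q k t x i j * pd2 i j (fun y => ζ y k) x)
    + (∑ j, b k t x j * pd j (fun y => ζ y k) x)
    + (∑ h, c t x k h * ζ x h)

/-- The matrix `C^P`: diagonal entries of `C`, absolute values off the diagonal. -/
def CP (c : ℝ → Euc d → Fin m → Fin m → ℝ) :
    ℝ → Euc d → Fin m → Fin m → ℝ :=
  fun t x k h => if k = h then c t x k h else |c t x k h|

/-- Smallest eigenvalue of a (symmetric) matrix, via the Rayleigh quotient. -/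
def minEig (A : Fin d → Fin d → ℝ) : ℝ :=
  sInf {r : ℝ | ∃ ξ : Euc d, ‖ξ‖ = 1 ∧ r = ∑ i, ∑ j, A i j * ξ i * ξ j}

/-- Local parabolic `(α/2, α)`-Hölder continuity on `I × ℝ^d`. -/
def LocParHolder {F : Type*} [NormedAddCommGroup F] (α : ℝ) (I : Set ℝ)
    (f : ℝ → Euc d → F) : Prop :=
  ∀ K : Set (ℝ × Euc d), K ⊆ I ×ˢ (univ : Set (Euc d)) → IsCompact K →
    ∃ L : ℝ, ∀ p ∈ K, ∀ q ∈ K,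
      ‖f p.1 p.2 - f q.1 q.2‖ ≤ L * (|p.1 - q.1| ^ (α / 2) + ‖p.2 - q.2‖ ^ α)

/-- `I` is a right half-line (possibly all of `ℝ`). -/
def IsRightHalfline (I : Set ℝ) : Prop := (∃ a, I = Ici a) ∨ I = univ

/-- Hypotheses (H). -/
structure Hyp (I : Set ℝ)
    (Q : Fin m → ℝ → Euc d → Fin d → Fin d → ℝ)
    (b : Fin m → ℝ → Euc d → Fin d → ℝ)
    (c : ℝ → Euc d → Fin m → Fin m → ℝ) : Prop where
  symm : ∀ k t x i j, Q k t x i j = Q k t x j i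
  holder : ∃ α ∈ Ioo (0:ℝ) 1,
      (∀ k i j, LocParHolder α I (fun t x => Q k t x i j)) ∧
      (∀ k j, LocParHolder α I (fun t x => b k t x j)) ∧
      (∀ k h, LocParHolder α I (fun t x => c t x k h))
  ellipt : ∀ J : Set ℝ, J ⊆ I → Bornology.IsBounded J →
      ∀ k, ∃ μ0 > 0, ∀ t ∈ J, ∀ x : Euc d, μ0 ≤ minEig (Q k t x)
  lyap : ∀ J : Set ℝ, J ⊆ I → Bornology.IsBounded J →
      ∃ φ : Euc d → Fin m → ℝ, ∃ lam > 0,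
        (∀ k, ContDiff ℝ 2 (fun x => φ x k)) ∧
        (∀ x k, 0 < φ x k) ∧
        (∀ k, Tendsto (fun x => φ x k) (cocompact (Euc d)) atTop) ∧
        (∀ t ∈ J, ∀ x k, opA Q b (CP c) t φ x k ≤ lam * φ x k)
  irred : ¬ ∃ K : Set (Fin m), K.Nonempty ∧ K ≠ univ ∧
      ∀ i ∈ K, ∀ j ∉ K, ∀ t ∈ I, ∀ x : Euc d, c t x i j = 0
  rowBdd : ∀ J : Set ℝ, J ⊆ I → Bornology.IsBounded J →
      ∃ M : ℝ, ∀ t ∈ J, ∀ x : Euc d, ∀ k, (∑ j, CP c t x k j) ≤ M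

/-- `f` is bounded and continuous (membership in `C_b(ℝ^d; ℝ^m)`). -/
def IsBddContinuous (f : Euc d → Fin m → ℝ) : Prop :=
  Continuous f ∧ ∃ F, ∀ x k, |f x k| ≤ F

/-- Classical solution of the Cauchy problem for the operator with coefficients
`Q, b, c`, datum `f` at time `s`. -/
def ClassicalSol (Q : Fin m → ℝ → Euc d → Fin d → Fin d → ℝ)
    (b : Fin m → ℝ → Euc d → Fin d → ℝ)
    (c : ℝ → Euc d → Fin m → Fin m → ℝ)
    (s : ℝ) (f : Euc d → Fin m → ℝ) (u : ℝ → Euc d → Fin m → ℝ) : Prop :=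
  ContinuousOn (fun p : ℝ × Euc d => u p.1 p.2) (Ici s ×ˢ (univ : Set (Euc d))) ∧
  (∀ x, u s x = f x) ∧
  (∀ t ∈ Ioi s, ∀ k, ContDiff ℝ 2 (fun x => u t x k)) ∧
  (∀ t ∈ Ioi s, ∀ x k, HasDerivAt (fun r => u r x k) (opA Q b c t (u t) x k) t)

/-- Bounded on every strip `[s,T] × ℝ^d`. -/
def BddOnStrips (s : ℝ) (u : ℝ → Euc d → Fin m → ℝ) : Prop :=
  ∀ T > s, ∃ K, ∀ t ∈ Icc s T, ∀ x k, |u t x k| ≤ K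

theorem IsLocalMin.deriv_deriv_nonneg {g : ℝ → ℝ} {a : ℝ} (hmin : IsLocalMin g a)
    (hg : ContinuousAt g a) : 0 ≤ deriv (deriv g) a := by
  by_contra! hneg
  -- a negative second derivative would make `a` a local maximum too, so `g` locally constant
  have hconst : g =ᶠ[𝓝 a] fun _ => g a := by
    filter_upwards [hmin, isLocalMax_of_deriv_deriv_neg hneg hmin.deriv_eq_zero hg]
      with x hx₁ hx₂ using le_antisymm hx₂ hx₁
  have hderiv : deriv g =ᶠ[𝓝 a] fun _ => 0 := by
    simpa using hconst.deriv
  simp [hderiv.deriv_eq] at hneg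

theorem IsLocalMin.fderiv_fderiv_nonneg {E : Type*} [NormedAddCommGroup E] [NormedSpace ℝ E]
    {F : E → ℝ} {a : E} (hF : ContDiff ℝ 2 F) (hmin : IsLocalMin F a) (η : E) :
    0 ≤ fderiv ℝ (fderiv ℝ F) a η η := by
  have hline : ∀ r : ℝ, HasDerivAt (fun r : ℝ => a + r • η) η r := fun r => by
    simpa using ((hasDerivAt_id r).smul_const η).const_add a
  have hDF : Differentiable ℝ (fderiv ℝ F) :=
    (hF.fderiv_right (by norm_num)).differentiable one_ne_zero
  have hderiv : deriv (fun r : ℝ => F (a + r • η)) = fun r => fderiv ℝ F (a + r • η) η :=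
    funext fun r => ((hF.differentiable (by norm_num) _).hasFDerivAt.comp_hasDerivAt r
      (hline r)).deriv
  have hderiv2 : HasDerivAt (fun r : ℝ => fderiv ℝ F (a + r • η) η)
      (fderiv ℝ (fderiv ℝ F) a η η) 0 := by
    have := ((hDF _).hasFDerivAt.comp_hasDerivAt 0 (hline 0)).clm_apply (hasDerivAt_const 0 η)
    simpa using this
  have hmin' : IsLocalMin (fun r : ℝ => F (a + r • η)) 0 := by
    refine IsLocalMin.comp_continuous (by simpa using hmin) ?_
    fun_prop
  have := hmin'.deriv_deriv_nonneg (hF.continuous.comp (by fun_prop)).continuousAt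
  rwa [hderiv, hderiv2.deriv] at this

theorem hasDerivAt_nonpos_of_isMinOn_Icc {g : ℝ → ℝ} {g' a b : ℝ} (hg : HasDerivAt g g' b)
    (hab : a < b) (hmin : IsMinOn g (Icc a b) b) : g' ≤ 0 := by
  have hcone : a - b ∈ tangentConeAt NNReal (Icc a b) b :=
    sub_mem_posTangentConeAt_of_openSegment_subset
      ((openSegment_subset_segment ℝ b a).trans (segment_symm ℝ b a ▸ segment_subset_Icc hab.le))
  have := hmin.localize.hasFDerivWithinAt_nonneg hg.hasFDerivAt.hasFDerivWithinAt hcone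
  simp only [ContinuousLinearMap.toSpanSingleton_apply, smul_eq_mul] at this
  exact nonpos_of_mul_nonneg_right this (sub_neg.mpr hab)

section PartialDerivatives

variable {f g : Euc d → ℝ} {x : Euc d}

theorem differentiable_pd (hf : ContDiff ℝ 2 f) (j : Fin d) : Differentiable ℝ (pd j f) :=
  ((hf.fderiv_right (by norm_num)).differentiable one_ne_zero).clm_apply
    (differentiable_const _)

theorem pd_linComb (hf : DifferentiableAt ℝ f x) (hg : DifferentiableAt ℝ g x) (A B : ℝ)
    (j : Fin d) : pd j (fun y => A * f y + B * g y) x = A * pd j f x + B * pd j g x := by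
  simp [pd, fderiv_fun_add (hf.const_mul A) (hg.const_mul B), fderiv_const_mul hf,
    fderiv_const_mul hg]

theorem pd2_linComb (hf : ContDiff ℝ 2 f) (hg : ContDiff ℝ 2 g) (A B : ℝ) (i j : Fin d) :
    pd2 i j (fun y => A * f y + B * g y) x = A * pd2 i j f x + B * pd2 i j g x := by
  have hpd : pd j (fun y => A * f y + B * g y) = fun y => A * pd j f y + B * pd j g y :=
    funext fun y => pd_linComb (hf.differentiable (by norm_num) y)
      (hg.differentiable (by norm_num) y) A B j
  rw [pd2, hpd]
  exact pd_linComb (differentiable_pd hf j x) (differentiable_pd hg j x) A B i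

theorem pd2_eq_fderiv_fderiv (hf : ContDiff ℝ 2 f) (i j : Fin d) :
    pd2 i j f x = fderiv ℝ (fderiv ℝ f) x (EuclideanSpace.single i 1)
      (EuclideanSpace.single j 1) := by
  have hDf : Differentiable ℝ (fderiv ℝ f) :=
    (hf.fderiv_right (by norm_num)).differentiable one_ne_zero
  simp [pd2, pd, fderiv_clm_apply (hDf x) (differentiableAt_const _)]

theorem IsLocalMin.sum_pd2_mul_nonneg (hf : ContDiff ℝ 2 f) (hmin : IsLocalMin f x)
    (ξ : Fin d → ℝ) : 0 ≤ ∑ i, ∑ j, pd2 i j f x * ξ i * ξ j := by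
  set η : Euc d := ∑ i, ξ i • EuclideanSpace.single i 1
  convert hmin.fderiv_fderiv_nonneg hf η using 1
  rw [Finset.sum_comm]
  simp [η, pd2_eq_fderiv_fderiv hf, map_sum, Finset.mul_sum, mul_comm]

end PartialDerivatives

theorem sum_mul_nonneg_of_posSemidef {n : Type*} [Fintype n] {A H : n → n → ℝ}
    (hA : (Matrix.of A).PosSemidef) (hH : ∀ ξ : n → ℝ, 0 ≤ ∑ i, ∑ j, H i j * ξ i * ξ j) :
    0 ≤ ∑ i, ∑ j, A i j * H i j := by
  obtain ⟨r, v, hv⟩ := Matrix.posSemidef_iff_eq_sum_vecMulVec.mp hA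
  have hentry : ∀ i j, A i j = ∑ l, v l i * v l j := fun i j => by
    simpa [Matrix.sum_apply, Matrix.vecMulVec_apply] using congrFun (congrFun hv i) j
  calc (0 : ℝ) ≤ ∑ l, ∑ i, ∑ j, H i j * v l i * v l j :=
        Finset.sum_nonneg fun l _ => hH (v l)
    _ = ∑ i, ∑ j, A i j * H i j := by
        simp only [hentry, Finset.sum_mul]
        rw [Finset.sum_comm]
        refine Finset.sum_congr rfl fun i _ => ?_
        rw [Finset.sum_comm]
        exact Finset.sum_congr rfl fun j _ => Finset.sum_congr rfl fun l _ => by ring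

theorem posSemidef_of_minEig_nonneg {A : Fin d → Fin d → ℝ} (hsymm : ∀ i j, A i j = A j i)
    (h : 0 ≤ minEig A) : (Matrix.of A).PosSemidef := by
  set q : Euc d → ℝ := fun ξ => ∑ i, ∑ j, A i j * ξ i * ξ j
  have hq_sphere : ∀ ζ : Euc d, ‖ζ‖ = 1 → 0 ≤ q ζ := by
    intro ζ hζ
    have hbdd : BddBelow {r : ℝ | ∃ ξ : Euc d, ‖ξ‖ = 1 ∧ r = q ξ} := by
      have hcont : Continuous q := by fun_prop
      obtain ⟨B, hB⟩ := ((isCompact_sphere (0 : Euc d) 1).image hcont).bddBelow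
      exact ⟨B, fun r ⟨ξ, hξ, hr⟩ => hr ▸ hB ⟨ξ, by simpa using hξ, rfl⟩⟩
    exact h.trans (csInf_le hbdd ⟨ζ, hζ, rfl⟩)
  have hq_smul : ∀ (c : ℝ) (ξ : Euc d), q (c • ξ) = c ^ 2 * q ξ := fun c ξ => by
    simp only [q, Finset.mul_sum, PiLp.smul_apply, smul_eq_mul]
    exact Finset.sum_congr rfl fun i _ => Finset.sum_congr rfl fun j _ => by ring
  have hq : ∀ ξ : Euc d, 0 ≤ q ξ := by
    intro ξ
    rcases eq_or_ne ξ 0 with rfl | hξ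
    · simp [q]
    · have hnorm : 0 < ‖ξ‖ := norm_pos_iff.mpr hξ
      have := hq_sphere (‖ξ‖⁻¹ • ξ) (by simp [norm_smul, hnorm.ne'])
      rw [hq_smul] at this
      exact (mul_nonneg_iff_of_pos_left (by positivity)).mp this
  refine Matrix.PosSemidef.of_dotProduct_mulVec_nonneg ?_ fun ξ => ?_
  · ext i j
    exact hsymm j i
  · refine (hq (WithLp.toLp 2 ξ)).trans_eq ?_
    simp [q, dotProduct, Matrix.mulVec, Finset.mul_sum, mul_comm, mul_left_comm]

def diffOp (a : Fin d → Fin d → ℝ) (β : Fin d → ℝ) (g : Euc d → ℝ) (x : Euc d) : ℝ :=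
  (∑ i, ∑ j, a i j * pd2 i j g x) + ∑ j, β j * pd j g x

/-- `opA` for systems indexed by any finite type, such as the doubled system `Bool × Fin m`. -/
def sysOp {ι : Type*} [Fintype ι] (Q : ι → ℝ → Euc d → Fin d → Fin d → ℝ)
    (b : ι → ℝ → Euc d → Fin d → ℝ) (c : ℝ → Euc d → ι → ι → ℝ) (t : ℝ)
    (ζ : Euc d → ι → ℝ) (x : Euc d) (k : ι) : ℝ :=
  diffOp (Q k t x) (b k t x) (fun y => ζ y k) x + ∑ h, c t x k h * ζ x h

theorem opA_eq_sysOp (Q : Fin m → ℝ → Euc d → Fin d → Fin d → ℝ)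
    (b : Fin m → ℝ → Euc d → Fin d → ℝ) (c : ℝ → Euc d → Fin m → Fin m → ℝ) (t : ℝ)
    (ζ : Euc d → Fin m → ℝ) (x : Euc d) (k : Fin m) :
    opA Q b c t ζ x k = sysOp Q b c t ζ x k := rfl

section Operators

variable {a : Fin d → Fin d → ℝ} {β : Fin d → ℝ} {f g : Euc d → ℝ} {x : Euc d}

theorem diffOp_linComb (hf : ContDiff ℝ 2 f) (hg : ContDiff ℝ 2 g) (A B : ℝ) :
    diffOp a β (fun y => A * f y + B * g y) x = A * diffOp a β f x + B * diffOp a β g x := by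
  simp only [diffOp, pd2_linComb hf hg,
    pd_linComb (hf.differentiable (by norm_num) x) (hg.differentiable (by norm_num) x),
    mul_add, Finset.sum_add_distrib, Finset.mul_sum, mul_left_comm _ A, mul_left_comm _ B]
  ring

theorem IsLocalMin.diffOp_nonneg (ha : (Matrix.of a).PosSemidef) (hf : ContDiff ℝ 2 f)
    (hmin : IsLocalMin f x) : 0 ≤ diffOp a β f x := by
  have hgrad : ∀ j, pd j f x = 0 := fun j => by simp [pd, hmin.fderiv_eq_zero]
  simpa [diffOp, hgrad] using sum_mul_nonneg_of_posSemidef ha (hmin.sum_pd2_mul_nonneg hf)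

variable {ι : Type*} [Fintype ι] {Q : ι → ℝ → Euc d → Fin d → Fin d → ℝ}
  {b : ι → ℝ → Euc d → Fin d → ℝ} {c : ℝ → Euc d → ι → ι → ℝ} {t : ℝ} {ζ η V : Euc d → ι → ℝ}
  {k : ι}

theorem sysOp_linComb (hζ : ContDiff ℝ 2 fun y => ζ y k) (hη : ContDiff ℝ 2 fun y => η y k)
    (A B : ℝ) :
    sysOp Q b c t (fun y h => A * ζ y h + B * η y h) x k
      = A * sysOp Q b c t ζ x k + B * sysOp Q b c t η x k := by
  simp only [sysOp, diffOp_linComb hζ hη, mul_add, Finset.sum_add_distrib, Finset.mul_sum,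
    mul_left_comm _ A, mul_left_comm _ B]
  ring

theorem mul_le_sysOp_of_forall_le {M : ℝ} (ha : (Matrix.of (Q k t x)).PosSemidef)
    (hcoop : ∀ h, h ≠ k → 0 ≤ c t x k h) (hrow : ∑ h, c t x k h ≤ M)
    (hV : ContDiff ℝ 2 fun y => V y k) (hmin : ∀ y h, V x k ≤ V y h) (hneg : V x k ≤ 0) :
    M * V x k ≤ sysOp Q b c t V x k := by
  have hdiff : 0 ≤ diffOp (Q k t x) (b k t x) (fun y => V y k) x :=
    IsLocalMin.diffOp_nonneg ha hV (Eventually.of_forall fun y => hmin y k)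
  have hcoupling : ∑ h, c t x k h * V x k ≤ ∑ h, c t x k h * V x h := by
    refine Finset.sum_le_sum fun h _ => ?_
    rcases eq_or_ne h k with rfl | hne
    · rfl
    · exact mul_le_mul_of_nonneg_left (hmin x h) (hcoop h hne)
  rw [← Finset.sum_mul] at hcoupling
  have := mul_le_mul_of_nonpos_right hrow hneg
  unfold sysOp
  linarith

end Operators

theorem exists_forall_le_of_eventually_pos {X ι : Type*} [TopologicalSpace X] [Fintype ι]
    {s T : ℝ} {v : ℝ → X → ι → ℝ}
    (hv : ∀ k, ContinuousOn (fun p : ℝ × X => v p.1 p.2 k) (Icc s T ×ˢ univ))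
    (hpos : ∀ᶠ x in cocompact X, ∀ t ∈ Icc s T, ∀ k, 0 < v t x k)
    {t₁ : ℝ} {x₁ : X} {k₁ : ι} (ht₁ : t₁ ∈ Icc s T) (hneg : v t₁ x₁ k₁ < 0) :
    ∃ t₀ ∈ Icc s T, ∃ x₀ k₀, v t₀ x₀ k₀ < 0 ∧ ∀ t ∈ Icc s T, ∀ x k, v t₀ x₀ k₀ ≤ v t x k := by
  have hne : (Finset.univ : Finset ι).Nonempty := ⟨k₁, Finset.mem_univ _⟩
  set g : ℝ × X → ℝ := fun p => Finset.univ.inf' hne (v p.1 p.2 ·)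
  have hg_le : ∀ p : ℝ × X, ∀ k, g p ≤ v p.1 p.2 k := fun p k =>
    Finset.inf'_le _ (Finset.mem_univ k)
  have hg : ContinuousOn g (Icc s T ×ˢ univ) :=
    ContinuousOn.finset_inf'_apply hne fun k _ => hv k
  have hg_pos : ∀ᶠ p in cocompact (ℝ × X) ⊓ 𝓟 (Icc s T ×ˢ univ), g (t₁, x₁) ≤ g p := by
    obtain ⟨C, hC, hCpos⟩ := mem_cocompact.mp hpos
    have hK : IsCompact (Icc s T ×ˢ C) := isCompact_Icc.prod hC
    refine mem_inf_principal'.mpr (mem_of_superset hK.compl_mem_cocompact ?_)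
    rintro ⟨t, x⟩ hp
    refine or_iff_not_imp_left.mpr fun ht => ?_
    have ht : t ∈ Icc s T := by simpa using ht
    have hx : x ∉ C := fun hx => hp ⟨ht, hx⟩
    refine ((hg_le _ k₁).trans hneg.le).trans (Finset.le_inf' _ _ fun k _ => ?_)
    exact (hCpos hx t ht k).le
  obtain ⟨⟨t₀, x₀⟩, ⟨ht₀, -⟩, hmin⟩ :=
    hg.exists_isMinOn' (isClosed_Icc.prod isClosed_univ) ⟨ht₁, mem_univ _⟩ hg_pos
  obtain ⟨k₀, -, hk₀⟩ := Finset.exists_mem_eq_inf' hne (v t₀ x₀ ·)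
  have hmin' : ∀ t ∈ Icc s T, ∀ x k, v t₀ x₀ k₀ ≤ v t x k := fun t ht x k =>
    hk₀ ▸ (hmin ⟨ht, mem_univ x⟩).trans (hg_le (t, x) k)
  exact ⟨t₀, ht₀, x₀, k₀, (hmin' t₁ ht₁ x₁ k₁).trans_lt hneg, hmin'⟩

section MaximumPrinciple

variable {ι : Type*} {Q : ι → ℝ → Euc d → Fin d → Fin d → ℝ}
  {b : ι → ℝ → Euc d → Fin d → ℝ} {c : ℝ → Euc d → ι → ι → ℝ} {s T M μ ε lam : ℝ}
  {φ : Euc d → ι → ℝ} {w : ℝ → Euc d → ι → ℝ}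

def penalized (s M μ ε : ℝ) (w : ℝ → Euc d → ι → ℝ) (φ : Euc d → ι → ℝ) (t : ℝ) (x : Euc d)
    (k : ι) : ℝ :=
  Real.exp (-M * (t - s)) * w t x k + ε * Real.exp (μ * (t - s)) * φ x k

theorem nonneg_of_forall_penalized_nonneg {t : ℝ} {x : Euc d} {k : ι} (hφ_pos : 0 < φ x k)
    (h : ∀ ε > 0, 0 ≤ penalized s M μ ε w φ t x k) : 0 ≤ w t x k := by
  have hC : 0 < Real.exp (μ * (t - s)) * φ x k := mul_pos (Real.exp_pos _) hφ_pos
  have hweighted : 0 ≤ Real.exp (-M * (t - s)) * w t x k := by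
    refine le_of_forall_pos_le_add fun δ hδ => ?_
    have := h (δ / (Real.exp (μ * (t - s)) * φ x k)) (by positivity)
    rwa [penalized, mul_assoc _ (Real.exp _), div_mul_cancel₀ _ hC.ne'] at this
  exact (mul_nonneg_iff_of_pos_left (Real.exp_pos _)).mp hweighted

variable [Fintype ι]

theorem penalized_nonneg_of_isMin {t₀ : ℝ} {x₀ : Euc d} {k₀ : ι} (hst : s < t₀) (hε : 0 < ε)
    (hlam : lam < M + μ) (hQ : (Matrix.of (Q k₀ t₀ x₀)).PosSemidef)
    (hcoop : ∀ h, h ≠ k₀ → 0 ≤ c t₀ x₀ k₀ h) (hrow : ∑ h, c t₀ x₀ k₀ h ≤ M)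
    (hφ : ContDiff ℝ 2 fun x => φ x k₀) (hφ_pos : 0 < φ x₀ k₀)
    (hφ_super : sysOp Q b c t₀ φ x₀ k₀ ≤ lam * φ x₀ k₀) (hw : ContDiff ℝ 2 fun x => w t₀ x k₀)
    (hw_deriv : HasDerivAt (fun r => w r x₀ k₀) (sysOp Q b c t₀ (w t₀) x₀ k₀) t₀)
    (hmin : ∀ t ∈ Icc s t₀, ∀ x k,
      penalized s M μ ε w φ t₀ x₀ k₀ ≤ penalized s M μ ε w φ t x k) :
    0 ≤ penalized s M μ ε w φ t₀ x₀ k₀ := by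
  by_contra! hneg
  set E := Real.exp (-M * (t₀ - s))
  set G := ε * Real.exp (μ * (t₀ - s))
  have hderiv : HasDerivAt (fun r => penalized s M μ ε w φ r x₀ k₀)
      (-M * (E * w t₀ x₀ k₀) + E * sysOp Q b c t₀ (w t₀) x₀ k₀ + μ * (G * φ x₀ k₀)) t₀ := by
    have hlin : ∀ a : ℝ, HasDerivAt (fun r => a * (r - s)) a t₀ := fun a => by
      simpa using ((hasDerivAt_id t₀).sub_const s).const_mul a
    exact (((hlin (-M)).exp.mul hw_deriv).add
      (((hlin μ).exp.const_mul ε).mul_const (φ x₀ k₀))).congr_deriv (by ring)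
  have htime := hasDerivAt_nonpos_of_isMinOn_Icc hderiv hst fun t ht => hmin t ht x₀ k₀
  have hspace : M * penalized s M μ ε w φ t₀ x₀ k₀
      ≤ E * sysOp Q b c t₀ (w t₀) x₀ k₀ + G * sysOp Q b c t₀ φ x₀ k₀ := by
    rw [← sysOp_linComb hw hφ]
    exact mul_le_sysOp_of_forall_le hQ hcoop hrow
      ((contDiff_const.mul hw).add (contDiff_const.mul hφ))
      (fun y h => hmin t₀ ⟨hst.le, le_rfl⟩ y h) hneg.le
  have hG : 0 < G := by positivity
  have hgap : 0 < (M + μ - lam) * (G * φ x₀ k₀) := mul_pos (by linarith) (mul_pos hG hφ_pos)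
  have hsuper := mul_le_mul_of_nonneg_left hφ_super hG.le
  rw [penalized] at hspace
  linarith

theorem eventually_penalized_pos (hM : 0 ≤ M) (hμ : 0 ≤ μ) (hε : 0 < ε)
    (hφ_tendsto : ∀ k, Tendsto (fun x => φ x k) (cocompact (Euc d)) atTop)
    (hw_bdd : ∃ K, ∀ t ∈ Icc s T, ∀ x k, -K ≤ w t x k) :
    ∀ᶠ x in cocompact (Euc d), ∀ t ∈ Icc s T, ∀ k, 0 < penalized s M μ ε w φ t x k := by
  obtain ⟨K, hK⟩ := hw_bdd
  filter_upwards [eventually_all.mpr fun k =>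
    (hφ_tendsto k).eventually_gt_atTop (max K 0 / ε)] with x hx t ht k
  have hE : Real.exp (-M * (t - s)) ≤ 1 :=
    Real.exp_le_one_iff.mpr (by nlinarith [ht.1])
  have hG : 1 ≤ Real.exp (μ * (t - s)) :=
    Real.one_le_exp_iff.mpr (by nlinarith [ht.1])
  have hφ : max K 0 < ε * φ x k := by rw [← div_lt_iff₀' hε]; exact hx k
  have hw : -max K 0 ≤ Real.exp (-M * (t - s)) * w t x k := by
    nlinarith [hK t ht x k, le_max_left K 0, le_max_right K 0, Real.exp_pos (-M * (t - s))]
  have : ε * φ x k ≤ ε * Real.exp (μ * (t - s)) * φ x k := by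
    nlinarith [mul_le_mul_of_nonneg_left hG ((le_max_right K 0).trans hφ.le)]
  rw [penalized]
  linarith

theorem nonneg_of_cooperative
    (hQ : ∀ k, ∀ t ∈ Ioc s T, ∀ x, (Matrix.of (Q k t x)).PosSemidef)
    (hcoop : ∀ t ∈ Ioc s T, ∀ x k h, h ≠ k → 0 ≤ c t x k h)
    (hrow : ∀ t ∈ Ioc s T, ∀ x k, ∑ h, c t x k h ≤ M)
    (hφ : ∀ k, ContDiff ℝ 2 fun x => φ x k) (hφ_pos : ∀ x k, 0 < φ x k)
    (hφ_tendsto : ∀ k, Tendsto (fun x => φ x k) (cocompact (Euc d)) atTop)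
    (hφ_super : ∀ t ∈ Ioc s T, ∀ x k, sysOp Q b c t φ x k ≤ lam * φ x k)
    (hw_cont : ∀ k, ContinuousOn (fun p : ℝ × Euc d => w p.1 p.2 k) (Icc s T ×ˢ univ))
    (hw : ∀ t ∈ Ioc s T, ∀ k, ContDiff ℝ 2 fun x => w t x k)
    (hw_deriv : ∀ t ∈ Ioc s T, ∀ x k,
      HasDerivAt (fun r => w r x k) (sysOp Q b c t (w t) x k) t)
    (hw_bdd : ∃ K, ∀ t ∈ Icc s T, ∀ x k, -K ≤ w t x k) (hw_init : ∀ x k, 0 ≤ w s x k) :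
    ∀ t ∈ Icc s T, ∀ x k, 0 ≤ w t x k := by
  set M' := max M 0
  set μ := |lam| + 1
  have hlam : lam < M' + μ := by linarith [le_abs_self lam, le_max_right M 0]
  suffices hpen : ∀ ε > 0, ∀ t ∈ Icc s T, ∀ x k, 0 ≤ penalized s M' μ ε w φ t x k from
    fun t ht x k => nonneg_of_forall_penalized_nonneg (hφ_pos x k) fun ε hε => hpen ε hε t ht x k
  intro ε hε
  by_contra! ⟨t₁, ht₁, x₁, k₁, hneg⟩
  have hv : ∀ k, ContinuousOn (fun p : ℝ × Euc d => penalized s M' μ ε w φ p.1 p.2 k)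
      (Icc s T ×ˢ univ) := fun k => by
    unfold penalized
    have := (hφ k).continuous
    fun_prop
  obtain ⟨t₀, ht₀, x₀, k₀, hneg₀, hmin⟩ := exists_forall_le_of_eventually_pos hv
    (eventually_penalized_pos (le_max_right M 0) (by positivity) hε hφ_tendsto hw_bdd)
    ht₁ hneg
  rcases ht₀.1.eq_or_lt with rfl | hst
  · have := mul_pos hε (hφ_pos x₀ k₀)
    simp only [penalized, sub_self, mul_zero, Real.exp_zero, one_mul, mul_one] at hneg₀
    linarith [hw_init x₀ k₀]
  · have ht₀' : t₀ ∈ Ioc s T := ⟨hst, ht₀.2⟩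
    refine hneg₀.not_ge (penalized_nonneg_of_isMin hst hε hlam (hQ k₀ t₀ ht₀' x₀)
      (hcoop t₀ ht₀' x₀ k₀) ((hrow t₀ ht₀' x₀ k₀).trans (le_max_left M 0)) (hφ k₀)
      (hφ_pos x₀ k₀) (hφ_super t₀ ht₀' x₀ k₀) (hw t₀ ht₀' k₀) (hw_deriv t₀ ht₀' x₀ k₀)
      fun t ht x k => hmin t ⟨ht.1, ht.2.trans ht₀.2⟩ x k)

end MaximumPrinciple

def boolSign (e : Bool) : ℝ := if e then 1 else -1

theorem abs_boolSign_mul (σ : Bool) (a : ℝ) : |boolSign σ * a| = |a| := by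
  cases σ <;> simp [boolSign]

def doubledCoupling (c : ℝ → Euc d → Fin m → Fin m → ℝ) (t : ℝ) (x : Euc d)
    (p q : Bool × Fin m) : ℝ :=
  (CP c t x p.2 q.2 + boolSign p.1 * boolSign q.1 * c t x p.2 q.2) / 2

section DoubledSystem

variable {Q : Fin m → ℝ → Euc d → Fin d → Fin d → ℝ} {b : Fin m → ℝ → Euc d → Fin d → ℝ}
  {c : ℝ → Euc d → Fin m → Fin m → ℝ} {t : ℝ} {x : Euc d}

theorem doubledCoupling_nonneg {p q : Bool × Fin m} (hpq : q ≠ p) :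
    0 ≤ doubledCoupling c t x p q := by
  obtain ⟨σ, k⟩ := p
  obtain ⟨τ, h⟩ := q
  rcases eq_or_ne k h with rfl | hkh
  · have hστ : τ ≠ σ := fun h => hpq (by rw [h])
    cases σ <;> cases τ <;> simp_all [doubledCoupling, CP, boolSign]
  · cases σ <;> cases τ <;> simp [doubledCoupling, CP, boolSign, hkh] <;>
      linarith [neg_abs_le (c t x k h), le_abs_self (c t x k h)]

theorem sum_doubledCoupling_mul (p : Bool × Fin m) (ζ η : Fin m → ℝ) :
    ∑ q, doubledCoupling c t x p q * (ζ q.2 - boolSign q.1 * η q.2)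
      = ∑ h, CP c t x p.2 h * ζ h - boolSign p.1 * ∑ h, c t x p.2 h * η h := by
  rw [Fintype.sum_prod_type, Finset.sum_comm, Finset.mul_sum, ← Finset.sum_sub_distrib]
  refine Finset.sum_congr rfl fun h _ => ?_
  rcases p with ⟨_ | _, k⟩ <;>
    simp only [Fintype.sum_bool, doubledCoupling, boolSign, Bool.false_eq_true, if_true,
      if_false] <;> ring

theorem sum_doubledCoupling (p : Bool × Fin m) :
    ∑ q, doubledCoupling c t x p q = ∑ h, CP c t x p.2 h := by
  simpa using sum_doubledCoupling_mul (c := c) (t := t) (x := x) p (fun _ => 1) (fun _ => 0)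

theorem sysOp_doubled {ζ η : Euc d → Fin m → ℝ} (p : Bool × Fin m)
    (hζ : ContDiff ℝ 2 fun y => ζ y p.2) (hη : ContDiff ℝ 2 fun y => η y p.2) :
    sysOp (fun p => Q p.2) (fun p => b p.2) (doubledCoupling c) t
        (fun y p => ζ y p.2 - boolSign p.1 * η y p.2) x p
      = opA Q b (CP c) t ζ x p.2 - boolSign p.1 * opA Q b c t η x p.2 := by
  have hdiff := diffOp_linComb (a := Q p.2 t x) (β := b p.2 t x) (x := x) hζ hη 1 (-boolSign p.1)
  simp only [one_mul, neg_mul, ← sub_eq_add_neg] at hdiff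
  rw [sysOp, hdiff, sum_doubledCoupling_mul, opA_eq_sysOp, opA_eq_sysOp, sysOp, sysOp]
  ring

theorem sysOp_doubled_lift (ζ : Euc d → Fin m → ℝ) (p : Bool × Fin m) :
    sysOp (fun p => Q p.2) (fun p => b p.2) (doubledCoupling c) t (fun y p => ζ y p.2) x p
      = opA Q b (CP c) t ζ x p.2 := by
  rw [sysOp, opA_eq_sysOp, sysOp]
  congr 1
  simpa using sum_doubledCoupling_mul (c := c) (t := t) (x := x) p (ζ x) 0

end DoubledSystem

theorem IsRightHalfline.Ici_subset {I : Set ℝ} (hI : IsRightHalfline I) {s : ℝ} (hs : s ∈ I) :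
    Ici s ⊆ I := by
  rcases hI with ⟨a, rfl⟩ | rfl
  · exact Ici_subset_Ici.mpr hs
  · exact subset_univ _

section CauchyProblem

variable {I : Set ℝ} {Q : Fin m → ℝ → Euc d → Fin d → Fin d → ℝ}
  {b : Fin m → ℝ → Euc d → Fin d → ℝ} {c : ℝ → Euc d → Fin m → Fin m → ℝ} {s T : ℝ}
  {f : Euc d → Fin m → ℝ} {u uP : ℝ → Euc d → Fin m → ℝ}

theorem Hyp.posSemidef (hH : Hyp I Q b c) {J : Set ℝ} (hJ : J ⊆ I)
    (hJb : Bornology.IsBounded J) (k : Fin m) :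
    ∀ t ∈ J, ∀ x, (Matrix.of (Q k t x)).PosSemidef := by
  obtain ⟨μ, hμ, hmin⟩ := hH.ellipt J hJ hJb k
  exact fun t ht x => posSemidef_of_minEig_nonneg (hH.symm k t x) (hμ.le.trans (hmin t ht x))

theorem ClassicalSol.continuousOn_Icc_prod (hu : ClassicalSol Q b c s f u) (k : Fin m) :
    ContinuousOn (fun p : ℝ × Euc d => u p.1 p.2 k) (Icc s T ×ˢ univ) :=
  ((continuous_apply k).comp_continuousOn hu.1).mono (prod_mono_left Icc_subset_Ici_self)

theorem ClassicalSol.hasDerivAt_doubled (hu : ClassicalSol Q b c s f u)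
    (huP : ClassicalSol Q b (CP c) s (fun x k => |f x k|) uP) {t : ℝ} (ht : s < t) (x : Euc d)
    (p : Bool × Fin m) :
    HasDerivAt (fun r => uP r x p.2 - boolSign p.1 * u r x p.2)
      (sysOp (fun p => Q p.2) (fun p => b p.2) (doubledCoupling c) t
        (fun y p => uP t y p.2 - boolSign p.1 * u t y p.2) x p) t := by
  rw [sysOp_doubled p (huP.2.2.1 t ht p.2) (hu.2.2.1 t ht p.2)]
  exact (huP.2.2.2 t ht x p.2).sub ((hu.2.2.2 t ht x p.2).const_mul _)

theorem doubled_nonneg (hH : Hyp I Q b c) (hJ : Icc s T ⊆ I) (hu : ClassicalSol Q b c s f u)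
    (huP : ClassicalSol Q b (CP c) s (fun x k => |f x k|) uP) {K KP : ℝ}
    (hK : ∀ t ∈ Icc s T, ∀ x k, |u t x k| ≤ K) (hKP : ∀ t ∈ Icc s T, ∀ x k, |uP t x k| ≤ KP) :
    ∀ t ∈ Icc s T, ∀ x, ∀ p : Bool × Fin m, 0 ≤ uP t x p.2 - boolSign p.1 * u t x p.2 := by
  have hIoc : Ioc s T ⊆ Icc s T := Ioc_subset_Icc_self
  obtain ⟨φ, lam, -, hφ, hφ_pos, hφ_tendsto, hφ_super⟩ := hH.lyap _ hJ (isBounded_Icc s T)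
  obtain ⟨M, hM⟩ := hH.rowBdd _ hJ (isBounded_Icc s T)
  refine nonneg_of_cooperative (Q := fun p => Q p.2) (b := fun p => b p.2)
    (c := doubledCoupling c) (φ := fun x p => φ x p.2)
    (w := fun t x p => uP t x p.2 - boolSign p.1 * u t x p.2)
    (fun p t ht x => hH.posSemidef hJ (isBounded_Icc s T) p.2 t (hIoc ht) x)
    (fun _ _ _ _ _ => doubledCoupling_nonneg)
    (fun t ht x p => (sum_doubledCoupling p).trans_le (hM t (hIoc ht) x p.2))
    (fun p => hφ p.2) (fun x p => hφ_pos x p.2) (fun p => hφ_tendsto p.2)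
    (fun t ht x p => (sysOp_doubled_lift φ p).trans_le (hφ_super t (hIoc ht) x p.2))
    (fun p => (huP.continuousOn_Icc_prod p.2).sub
      (continuousOn_const.mul (hu.continuousOn_Icc_prod p.2)))
    (fun t ht p => (huP.2.2.1 t ht.1 p.2).sub (contDiff_const.mul (hu.2.2.1 t ht.1 p.2)))
    (fun t ht x p => hu.hasDerivAt_doubled huP ht.1 x p) ⟨KP + K, fun t ht x p => ?_⟩
    fun x p => ?_
  · have := le_abs_self (boolSign p.1 * u t x p.2)
    rw [abs_boolSign_mul] at this
    linarith [(abs_le.mp (hKP t ht x p.2)).1, hK t ht x p.2]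
  · have := le_abs_self (boolSign p.1 * f x p.2)
    rw [abs_boolSign_mul] at this
    simpa [huP.2.1 x, hu.2.1 x] using this

end CauchyProblem

theorem statement_3_general {d m : ℕ}
    (I : Set ℝ) (hI : IsRightHalfline I)
    (Q : Fin m → ℝ → Euc d → Fin d → Fin d → ℝ)
    (b : Fin m → ℝ → Euc d → Fin d → ℝ)
    (c : ℝ → Euc d → Fin m → Fin m → ℝ)
    (hH : Hyp I Q b c)
    (s T : ℝ) (hs : s ∈ I) (hsT : s < T)
    (f : Euc d → Fin m → ℝ)
    (u : ℝ → Euc d → Fin m → ℝ)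
    (hu : ClassicalSol Q b c s f u) (hub : BddOnStrips s u)
    (uP : ℝ → Euc d → Fin m → ℝ)
    (huP : ClassicalSol Q b (CP c) s (fun x k => |f x k|) uP) (huPb : BddOnStrips s uP) :
    ∀ k : Fin m, ∀ t ∈ Icc s T, ∀ x : Euc d, |u t x k| ≤ |uP t x k| := by
  obtain ⟨K, hK⟩ := hub T hsT
  obtain ⟨KP, hKP⟩ := huPb T hsT
  have hW := doubled_nonneg hH (Icc_subset_Ici_self.trans (hI.Ici_subset hs)) hu huP hK hKP
  intro k t ht x
  have hplus := hW t ht x (true, k)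
  have hminus := hW t ht x (false, k)
  simp only [boolSign, if_true, Bool.false_eq_true, if_false] at hplus hminus
  rw [abs_of_nonneg (show 0 ≤ uP t x k by linarith)]
  exact abs_le.mpr ⟨by linarith, by linarith⟩

/-- Proposition 2.6(ii), comparison part: the solution of the Cauchy problem
for `𝒜` is dominated componentwise by the solution of the Cauchy problem for `𝒜^P`
with datum `|f|`. -/
theorem statement_3 {d m : ℕ} (hd : 1 ≤ d) (hm : 2 ≤ m)
    (I : Set ℝ) (hI : IsRightHalfline I)
    (Q : Fin m → ℝ → Euc d → Fin d → Fin d → ℝ)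
    (b : Fin m → ℝ → Euc d → Fin d → ℝ)
    (c : ℝ → Euc d → Fin m → Fin m → ℝ)
    (hH : Hyp I Q b c)
    (s T : ℝ) (hs : s ∈ I) (hT : T ∈ I) (hsT : s < T)
    (f : Euc d → Fin m → ℝ) (hf : IsBddContinuous f)
    (u : ℝ → Euc d → Fin m → ℝ)
    (hu : ClassicalSol Q b c s f u) (hub : BddOnStrips s u)
    (uP : ℝ → Euc d → Fin m → ℝ)
    (huP : ClassicalSol Q b (CP c) s (fun x k => |f x k|) uP) (huPb : BddOnStrips s uP) :
    ∀ k : Fin m, ∀ t ∈ Icc s T, ∀ x : Euc d, |u t x k| ≤ |uP t x k| :=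
  statement_3_general I hI Q b c hH s T hs hsT f u hu hub uP huP huPb
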